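/- arXiv:1810.00770 — 2 statements merged into one kernel-verified Lean document; each statement's English description precedes it below -/
import Mathlib

section
/- Let R ≥ 0, ε > 0, and let L, L̄, μ, μ̄ be real numbers with 0 < L ≤ L̄ and 0 < μ ≤ μ̄. Let S, x₃d, w, d be real numbers, set α₃ = R·|x₃d| + |w·(S + x₃d)|·μ̄ + |d|·L̄ + ε and u = −α₃·sign(S) (where sign(S) ∈ {−1,0,1} is the sign of S). Then S·((1/L)·(u − R·(S + x₃d) + w·(S + x₃d)·μ) − d) ≤ −(ε/L̄)·|S|. -/
/-!
Write `A` for the bracketed numerator. Since `S · sign S = |S|`, the control contributes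
`-α₃ |S|` to `S · A`, and the summands `R |x₃d|` and `|w (S + x₃d)| μ̄` of the gain absorb the
resistive and back-EMF terms in the worst case, so `S · A ≤ -(|d| L̄ + ε) |S| ≤ 0`. Dividing this
nonpositive quantity by `L ≤ L̄` only decreases it, to at most `-(|d| + ε / L̄) |S|`, and the
remaining `|d| |S|` absorbs the feed-forward term `-S d`.
-/

theorem Real.self_mul_sign (r : ℝ) : r * Real.sign r = |r| := by
  rcases lt_trichotomy r 0 with h | rfl | h
  · rw [Real.sign_of_neg h, abs_of_neg h, mul_neg_one]
  · simp
  · rw [Real.sign_of_pos h, abs_of_pos h, mul_one]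

theorem mul_sign_control_le {R μ μu α c S x v : ℝ} (hR : 0 ≤ R) (hμ : 0 ≤ μ) (hμ' : μ ≤ μu)
    (hα : R * |x| + |v| * μu + c ≤ α) :
    S * (-α * Real.sign S - R * (S + x) + v * μ) ≤ -c * |S| := by
  have hcontrol : S * (-α * Real.sign S) = -α * |S| := by
    rw [← Real.self_mul_sign S]; ring
  have hresistive : -(R * (S * (S + x))) ≤ R * (|S| * |x|) := by
    have hSx : -(S * x) ≤ |S| * |x| := abs_mul S x ▸ neg_le_abs _
    linarith [mul_nonneg hR (mul_self_nonneg S), mul_le_mul_of_nonneg_left hSx hR]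
  have huncertain : S * v * μ ≤ |S| * |v| * μu := by
    have hSv : S * v ≤ |S| * |v| := abs_mul S v ▸ le_abs_self _
    calc S * v * μ ≤ |S| * |v| * μ := mul_le_mul_of_nonneg_right hSv hμ
      _ ≤ |S| * |v| * μu := by gcongr
  have hgain : -α * |S| ≤ -(R * |x| + |v| * μu + c) * |S| :=
    mul_le_mul_of_nonneg_right (neg_le_neg hα) (abs_nonneg S)
  linarith

/-- Key estimate of Theorem 2: the discontinuous control u = -α₃ sign(S) with
gain α₃ = R|x₃d| + |w(S + x₃d)|μ̄ + |d|L̄ + ε makes the derivative of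
V₂ = (1/2)S² at most -(ε/L̄)|S|. -/
theorem sliding_mode_estimate (R ε L Lu μ μu S x₃d w d α₃ u : ℝ)
    (hR : 0 ≤ R) (hε : 0 < ε)
    (hL : 0 < L) (hL' : L ≤ Lu) (hμ : 0 < μ) (hμ' : μ ≤ μu)
    (hα₃ : α₃ = R * |x₃d| + |w * (S + x₃d)| * μu + |d| * Lu + ε)
    (hu : u = -α₃ * Real.sign S) :
    S * ((1 / L) * (u - R * (S + x₃d) + w * (S + x₃d) * μ) - d)
      ≤ -(ε / Lu) * |S| := by
  subst hu
  set A := -α₃ * Real.sign S - R * (S + x₃d) + w * (S + x₃d) * μ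
  have hLu : 0 < Lu := hL.trans_le hL'
  have hSA : S * A ≤ -(|d| * Lu + ε) * |S| :=
    mul_sign_control_le (c := |d| * Lu + ε) hR hμ.le hμ' (by rw [hα₃]; linarith)
  have hSA_nonpos : S * A ≤ 0 :=
    hSA.trans (mul_nonpos_of_nonpos_of_nonneg (neg_nonpos.mpr (by positivity)) (abs_nonneg S))
  have hscale : (1 / L) * (S * A) ≤ (1 / Lu) * (S * A) :=
    mul_le_mul_of_nonpos_right (one_div_le_one_div_of_le hL hL') hSA_nonpos
  have hfeedforward : -(S * d) ≤ |S| * |d| := abs_mul S d ▸ neg_le_abs _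
  calc S * ((1 / L) * A - d) = (1 / L) * (S * A) - S * d := by ring
    _ ≤ (1 / Lu) * (-(|d| * Lu + ε) * |S|) + |S| * |d| := by
      linarith [mul_le_mul_of_nonneg_left hSA (one_div_pos.mpr hLu).le]
    _ = -(ε / Lu) * |S| := by field_simp; ring
end

section
/- Let R ≥ 0, ε > 0, L̄ > 0, μ̄ > 0 be real numbers, and let S : ℝ → ℝ be differentiable with S(0) ≠ 0. Suppose there are functions L, μ, w, d, x₃d : ℝ → ℝ with 0 < L(t) ≤ L̄ and 0 < μ(t) ≤ μ̄ for all t, such that for all t ≥ 0, S'(t) = (1/L(t))·(−α₃(t)·sign(S(t)) − R·(S(t) + x₃d(t)) + w(t)·(S(t) + x₃d(t))·μ(t)) − d(t), where α₃(t) = R·|x₃d(t)| + |w(t)·(S(t) + x₃d(t))|·μ̄ + |d(t)|·L̄ + ε. Then there exists t* with 0 ≤ t* ≤ L̄·|S(0)|/ε such that S(t*) = 0. -/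
/-!
The reaching condition: the gain `α₃` dominates every other term of the closed loop, so
`sign S · Ṡ ≤ -ε / L̄` whenever `S ≠ 0`. Hence `|S|` decreases at rate at least `ε / L̄` as
long as `S` does not vanish, and the mean value theorem forces a zero of `S` before time
`L̄ |S(0)| / ε`.
-/

theorem exists_zero_of_deriv_le_neg {f : ℝ → ℝ} {c : ℝ} (hc : 0 < c) (hf : Continuous f)
    (h0 : 0 < f 0) (hdiff : ∀ t, 0 ≤ t → 0 < f t → DifferentiableAt ℝ f t)
    (hd : ∀ t, 0 ≤ t → 0 < f t → deriv f t ≤ -c) :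
    ∃ t, 0 ≤ t ∧ t ≤ f 0 / c ∧ f t = 0 := by
  set T := f 0 / c
  have hT : 0 < T := by positivity
  by_contra! hne
  have hpos : ∀ t ∈ Set.Icc 0 T, 0 < f t := by
    intro t ht
    by_contra! hft
    obtain ⟨s, hs, hfs⟩ := intermediate_value_Icc' ht.1 hf.continuousOn ⟨hft, h0.le⟩
    exact hne s hs.1 (hs.2.trans ht.2) hfs
  have hpos' : ∀ t ∈ Set.Ioo 0 T, 0 < f t := fun t ht => hpos t (Set.Ioo_subset_Icc_self ht)
  obtain ⟨ξ, hξ, hslope⟩ := exists_deriv_eq_slope f hT hf.continuousOn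
    fun t ht => (hdiff t ht.1.le (hpos' t ht)).differentiableWithinAt
  have hdrop : f T - f 0 ≤ -c * T := by
    have := hd ξ hξ.1.le (hpos' ξ hξ)
    rwa [hslope, sub_zero, div_le_iff₀ hT] at this
  have hcT : c * T = f 0 := mul_div_cancel₀ _ hc.ne'
  linarith [hpos T (Set.right_mem_Icc.mpr hT.le)]

theorem exists_zero_of_sign_mul_deriv_le_neg {f : ℝ → ℝ} {c : ℝ} (hc : 0 < c)
    (hf : Differentiable ℝ f) (h0 : f 0 ≠ 0)
    (hd : ∀ t, 0 ≤ t → f t ≠ 0 → Real.sign (f t) * deriv f t ≤ -c) :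
    ∃ t, 0 ≤ t ∧ t ≤ |f 0| / c ∧ f t = 0 := by
  have habs : ∀ t, f t ≠ 0 → HasDerivAt (fun x => |f x|) (Real.sign (f t) * deriv f t) t := by
    intro t ht
    have hsign : (SignType.sign (f t) : ℝ) = Real.sign (f t) := by
      rcases ht.lt_or_gt with h | h <;> simp [h, Real.sign_of_neg, Real.sign_of_pos]
    exact hsign ▸ (hasDerivAt_abs ht).comp t (hf t).hasDerivAt
  obtain ⟨t, ht0, htT, hft⟩ := exists_zero_of_deriv_le_neg hc hf.continuous.abs (abs_pos.mpr h0)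
    (fun t _ ht => (habs t (abs_pos.mp ht)).differentiableAt)
    (fun t ht0 ht => (habs t (abs_pos.mp ht)).deriv ▸ hd t ht0 (abs_pos.mp ht))
  exact ⟨t, ht0, htT, abs_eq_zero.mp hft⟩

theorem abs_sign_mul {s : ℝ} (hs : s ≠ 0) (y : ℝ) : |Real.sign s * y| = |y| := by
  rcases Real.sign_apply_eq_of_ne_zero s hs with h | h <;> simp [h]

theorem sign_mul_closedLoop_le {R ε Lu μu s x w μ d : ℝ} (hR : 0 ≤ R) (hs : s ≠ 0)
    (hμ : 0 ≤ μ) (hμ' : μ ≤ μu) :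
    Real.sign s * (-(R * |x| + |w * (s + x)| * μu + |d| * Lu + ε) * Real.sign s
      - R * (s + x) + w * (s + x) * μ) ≤ -(|d| * Lu + ε) := by
  set σ := Real.sign s
  set W := w * (s + x)
  have hσσ : σ * σ = 1 := by
    rcases Real.sign_apply_eq_of_ne_zero s hs with h | h <;> simp [σ, h]
  have hσs : 0 ≤ σ * s := Real.sign_mul_nonneg s
  have hσx : R * -(σ * x) ≤ R * |x| :=
    mul_le_mul_of_nonneg_left (abs_sign_mul hs x ▸ neg_le_abs _) hR
  have hσW : σ * W * μ ≤ |W| * μu :=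
    (mul_le_mul_of_nonneg_right (abs_sign_mul hs W ▸ le_abs_self _) hμ).trans
      (mul_le_mul_of_nonneg_left hμ' (abs_nonneg W))
  calc σ * (-(R * |x| + |W| * μu + |d| * Lu + ε) * σ - R * (s + x) + W * μ)
      = -(R * |x| + |W| * μu + |d| * Lu + ε) * (σ * σ) - R * (σ * s) + R * -(σ * x)
          + σ * W * μ := by ring
    _ ≤ -(|d| * Lu + ε) := by
        rw [hσσ, mul_one]
        linarith [mul_nonneg hR hσs]

theorem sign_mul_inv_mul_sub_le {s N d L Lu ε : ℝ} (hs : s ≠ 0) (hε : 0 ≤ ε) (hL : 0 < L)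
    (hL' : L ≤ Lu) (hN : Real.sign s * N ≤ -(|d| * Lu + ε)) :
    Real.sign s * ((1 / L) * N - d) ≤ -(ε / Lu) := by
  have hLu : 0 < Lu := hL.trans_le hL'
  have hK : 0 ≤ |d| * Lu + ε := by positivity
  have hσd : -(Real.sign s * d) ≤ |d| := abs_sign_mul hs d ▸ neg_le_abs _
  calc Real.sign s * ((1 / L) * N - d) = (1 / L) * (Real.sign s * N) - Real.sign s * d := by ring
    _ ≤ (1 / L) * -(|d| * Lu + ε) + |d| := by
        linarith [mul_le_mul_of_nonneg_left hN (one_div_nonneg.mpr hL.le)]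
    _ ≤ (1 / Lu) * -(|d| * Lu + ε) + |d| := by
        linarith [mul_le_mul_of_nonpos_right (one_div_le_one_div_of_le hL hL') (neg_nonpos.mpr hK)]
    _ = -(ε / Lu) := by field_simp; ring

theorem sliding_mode_finite_time_general (R ε Lu μu : ℝ)
    (hR : 0 ≤ R) (hε : 0 < ε)
    (S : ℝ → ℝ) (hS : Differentiable ℝ S) (hS0 : S 0 ≠ 0)
    (L μ w d x₃d α₃ : ℝ → ℝ)
    (hL : ∀ t, 0 < L t) (hL' : ∀ t, L t ≤ Lu)
    (hμ : ∀ t, 0 < μ t) (hμ' : ∀ t, μ t ≤ μu)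
    (hα₃ : ∀ t, α₃ t = R * |x₃d t| + |w t * (S t + x₃d t)| * μu
      + |d t| * Lu + ε)
    (hdS : ∀ t, 0 ≤ t → deriv S t =
      (1 / L t) * (-α₃ t * Real.sign (S t) - R * (S t + x₃d t)
        + w t * (S t + x₃d t) * μ t) - d t) :
    ∃ tstar : ℝ, 0 ≤ tstar ∧ tstar ≤ Lu * |S 0| / ε ∧ S tstar = 0 := by
  have hLu : 0 < Lu := (hL 0).trans_le (hL' 0)
  have hreach : ∀ t, 0 ≤ t → S t ≠ 0 → Real.sign (S t) * deriv S t ≤ -(ε / Lu) := by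
    intro t ht hSt
    rw [hdS t ht, hα₃ t]
    exact sign_mul_inv_mul_sub_le hSt hε.le (hL t) (hL' t)
      (sign_mul_closedLoop_le hR hSt (hμ t).le (hμ' t))
  obtain ⟨t, ht0, htT, hSt⟩ :=
    exists_zero_of_sign_mul_deriv_le_neg (div_pos hε hLu) hS hS0 hreach
  refine ⟨t, ht0, ?_, hSt⟩
  rwa [div_div_eq_mul_div, mul_comm] at htT

/-- Theorem 2 of the paper: the sliding variable S = x₃ - x₃d under the
discontinuous control u = -α₃ sign(S) reaches zero in finite time, no later
than L̄|S(0)|/ε. -/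
theorem sliding_mode_finite_time (R ε Lu μu : ℝ)
    (hR : 0 ≤ R) (hε : 0 < ε) (hLu : 0 < Lu) (hμu : 0 < μu)
    (S : ℝ → ℝ) (hS : Differentiable ℝ S) (hS0 : S 0 ≠ 0)
    (L μ w d x₃d α₃ : ℝ → ℝ)
    (hL : ∀ t, 0 < L t) (hL' : ∀ t, L t ≤ Lu)
    (hμ : ∀ t, 0 < μ t) (hμ' : ∀ t, μ t ≤ μu)
    (hα₃ : ∀ t, α₃ t = R * |x₃d t| + |w t * (S t + x₃d t)| * μu
      + |d t| * Lu + ε)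
    (hdS : ∀ t, 0 ≤ t → deriv S t =
      (1 / L t) * (-α₃ t * Real.sign (S t) - R * (S t + x₃d t)
        + w t * (S t + x₃d t) * μ t) - d t) :
    ∃ tstar : ℝ, 0 ≤ tstar ∧ tstar ≤ Lu * |S 0| / ε ∧ S tstar = 0 :=
  sliding_mode_finite_time_general R ε Lu μu hR hε S hS hS0 L μ w d x₃d α₃ hL hL' hμ hμ' hα₃ hdS
end
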